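/- The number of conjugacy classes of the Salingaros vee group G_{p,q} (equivalently, the number of inequivalent irreducible complex representations of G_{p,q}) equals 1 + 2^{p+q} when p + q is even and 2 + 2^{p+q} when p + q is odd. -/

import Mathlib

noncomputable section

/-- The quadratic form of signature `(p,q)` on `ℝ^(p+q)`. -/
def Qpq (p q : ℕ) : QuadraticForm ℝ (Fin (p + q) → ℝ) :=
  QuadraticMap.weightedSumSquares ℝ (fun i : Fin (p + q) => if (i : ℕ) < p then (1 : ℝ) else -1)

/-- The real Clifford algebra `Cl_{p,q}`. -/
abbrev Cl (p q : ℕ) : Type := CliffordAlgebra (Qpq p q)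

/-- The generators `e i` of `Cl_{p,q}`. -/
def gen (p q : ℕ) (i : Fin (p + q)) : Cl p q :=
  CliffordAlgebra.ι (Qpq p q) (Pi.single i 1)

/-- The Salingaros vee group `G_{p,q}`: the subgroup of the group of units of `Cl_{p,q}`
generated by `-1` and the generators `e i`. -/
def VeeGroup (p q : ℕ) : Subgroup (Cl p q)ˣ :=
  Subgroup.closure
    {u : (Cl p q)ˣ | (u : Cl p q) = -1 ∨ ∃ i : Fin (p + q), (u : Cl p q) = gen p q i}

/-- The unit pseudoscalar `β = e₁e₂⋯e_n` of `Cl_{p,q}`. -/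
def pseudoScalar (p q : ℕ) : Cl p q := (List.ofFn (gen p q)).prod


/-! Every element of `G_{p,q}` is `±e_s`, where `e_s` is the increasing product of the generators
indexed by `s ⊆ {1, …, n}`, `n = p + q`. Since `e_i e_s = (-1)^|s \ {i}| e_s e_i`, a monomial
commutes with all generators only for `s = ∅` or, when `n` is odd, `s = {1, …, n}`; the grade
involution negates `e_{1…n}` for odd `n` while fixing `±1`, so `e_s = ±1` forces `s = ∅`. Hence the
`2^{n+1}` elements `±e_s` are distinct, the centre is `{±1}` or `{±1, ±e_{1…n}}`, and any two
elements commute up to sign. So every non-central conjugacy class is a pair `{x, -x}`, and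
`2 · #classes = |G| + |Z(G)|`. -/

open Finset
open scoped symmDiff

section EqUpToSign

variable {M : Type*}

def EqUpToSign [Neg M] (x y : M) : Prop := x = y ∨ x = -y

infix:50 " ≡± " => EqUpToSign

namespace EqUpToSign

@[refl, simp] theorem refl [Neg M] (x : M) : x ≡± x := Or.inl rfl

section InvolutiveNeg

variable [InvolutiveNeg M] {x y z : M}

theorem symm (h : x ≡± y) : y ≡± x := by
  rcases h with rfl | rfl
  exacts [refl _, Or.inr (neg_neg y).symm]

theorem trans (h₁ : x ≡± y) (h₂ : y ≡± z) : x ≡± z := by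
  rcases h₁ with rfl | rfl <;> rcases h₂ with rfl | rfl
  exacts [refl _, Or.inr rfl, Or.inr rfl, Or.inl (neg_neg z)]

instance : @Trans M M M EqUpToSign EqUpToSign EqUpToSign := ⟨trans⟩

end InvolutiveNeg

variable [Mul M] [HasDistribNeg M] {x y z w : M}

theorem mul (h₁ : x ≡± y) (h₂ : z ≡± w) : x * z ≡± y * w := by
  rcases h₁ with rfl | rfl <;> rcases h₂ with rfl | rfl
  exacts [refl _, Or.inr (mul_neg _ _), Or.inr (neg_mul _ _), Or.inl (neg_mul_neg _ _)]

theorem mul_left (h : x ≡± y) (z : M) : z * x ≡± z * y := (refl z).mul h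

theorem mul_right (h : x ≡± y) (z : M) : x * z ≡± y * z := h.mul (refl z)

end EqUpToSign

theorem isUnit_of_mul_self_eqUpToSign_one [Monoid M] [HasDistribNeg M] {x : M}
    (h : x * x ≡± 1) : IsUnit x := by
  rcases h with h | h
  · exact ⟨⟨x, x, h, h⟩, rfl⟩
  · exact ⟨⟨x, -x, by rw [mul_neg, h, neg_neg], by rw [neg_mul, h, neg_neg]⟩, rfl⟩

theorem inv_eqUpToSign_self_of_mul_self [Group M] [HasDistribNeg M] {x : M}
    (h : x * x ≡± 1) : x⁻¹ ≡± x := by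
  rcases h with h | h
  · exact Or.inl (inv_eq_of_mul_eq_one_right h)
  · exact Or.inr (inv_eq_of_mul_eq_one_right (by rw [mul_neg, h, neg_neg]))

theorem Units.eqUpToSign_val_iff [Ring M] {u v : Mˣ} : (u : M) ≡± v ↔ u ≡± v := by
  simp only [EqUpToSign, Units.ext_iff, Units.val_neg]

end EqUpToSign

theorem Finset.singleton_symmDiff_of_notMem {α : Type*} [DecidableEq α] {a : α} {s : Finset α}
    (h : a ∉ s) : {a} ∆ s = insert a s := by
  rw [(disjoint_singleton_left.mpr h).symmDiff_eq_sup, insert_eq, sup_eq_union]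

theorem Finset.forall_even_card_erase_iff {α : Type*} [Fintype α] [DecidableEq α]
    {s : Finset α} :
    (∀ i, Even (s.erase i).card) ↔ s = ∅ ∨ (s = univ ∧ Odd (Fintype.card α)) := by
  constructor
  · intro h
    rcases s.eq_empty_or_nonempty with hs | ⟨i, hi⟩
    · exact Or.inl hs
    have hodd : Odd s.card := by
      have := (h i).add_one
      rwa [card_erase_of_mem hi, Nat.sub_one_add_one (card_ne_zero_of_mem hi)] at this
    have huniv : s = univ := by
      refine eq_univ_of_forall fun j => by_contra fun hj => ?_
      have := h j
      rw [erase_eq_of_notMem hj] at this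
      exact Nat.not_even_iff_odd.mpr hodd this
    exact Or.inr ⟨huniv, by rwa [← card_univ, ← huniv]⟩
  · rintro (rfl | ⟨rfl, hodd⟩) i
    · simp
    · rw [card_erase_of_mem (mem_univ i), card_univ]
      exact hodd.tsub_odd odd_one

theorem Finset.nat_card_forall_even_card_erase {α : Type*} [Fintype α] [DecidableEq α] :
    Nat.card {s : Finset α // ∀ i, Even (s.erase i).card} =
      if Odd (Fintype.card α) then 2 else 1 := by
  simp_rw [forall_even_card_erase_iff]
  split_ifs with h
  · have : Nonempty α := Fintype.card_pos_iff.mp h.pos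
    simp only [h, and_true]
    exact (Nat.card_coe_set_eq {s : Finset α | s = ∅ ∨ s = univ}).trans
      (Set.ncard_pair univ_nonempty.ne_empty.symm)
  · simp [h]

theorem Group.two_mul_nat_card_conjClasses {G : Type*} [Group G] [Finite G] (z : G)
    (h : ∀ x y : G, IsConj x y → y = x ∨ y = z * x) :
    2 * Nat.card (ConjClasses G) = Nat.card G + Nat.card (Subgroup.center G) := by
  have hclass : ∀ c ∈ ConjClasses.noncenter G, Nat.card c.carrier = 2 := by
    intro c hc
    obtain ⟨x, rfl⟩ := ConjClasses.mk_surjective c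
    have hsub : (ConjClasses.mk x).carrier ⊆ {x, z * x} := fun y hy =>
      h x y (ConjClasses.mk_eq_mk_iff_isConj.mp (ConjClasses.mem_carrier_iff_mk_eq.mp hy).symm)
    have hle := (Set.ncard_le_ncard hsub).trans (Set.ncard_insert_le _ _)
    have hlt := Set.one_lt_ncard_iff_nontrivial.mpr hc
    rw [Set.ncard_singleton] at hle
    rw [Nat.card_coe_set_eq]
    omega
  have hcenter : Nat.card (Subgroup.center G) = (ConjClasses.noncenter G)ᶜ.ncard := by
    rw [← Nat.card_coe_set_eq]
    exact Nat.card_congr ((ConjClasses.mk_bijOn G).equiv _)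
  have hsum := Group.nat_card_center_add_sum_card_noncenter_eq_card G
  rw [finsum_mem_congr rfl hclass, ← mul_one 2, ← mul_finsum_mem, finsum_one] at hsum
  have hsplit := Set.ncard_add_ncard_compl (ConjClasses.noncenter G)
  omega

section Generators

variable {p q : ℕ}

theorem Qpq_single (i : Fin (p + q)) :
    Qpq p q (Pi.single i 1) = if (i : ℕ) < p then 1 else -1 := by
  simp [Qpq, QuadraticMap.weightedSumSquares_apply, Pi.single_apply]

theorem Qpq_isOrtho_single {i j : Fin (p + q)} (h : i ≠ j) :
    (Qpq p q).IsOrtho (Pi.single i 1) (Pi.single j 1) := by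
  rw [QuadraticMap.isOrtho_def]
  simp only [Qpq, QuadraticMap.weightedSumSquares_apply, Pi.add_apply, Pi.single_apply,
    smul_eq_mul, ← Finset.sum_add_distrib]
  refine Finset.sum_congr rfl fun k _ => ?_
  by_cases hk : k = i <;> by_cases hk' : k = j <;> simp_all

theorem gen_mul_gen_of_ne {i j : Fin (p + q)} (h : i ≠ j) :
    gen p q i * gen p q j = -(gen p q j * gen p q i) :=
  CliffordAlgebra.ι_mul_ι_comm_of_isOrtho (Qpq_isOrtho_single h)

theorem gen_mul_self (i : Fin (p + q)) : gen p q i * gen p q i ≡± 1 := by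
  rw [gen, CliffordAlgebra.ι_sq_scalar, Qpq_single]
  split_ifs
  exacts [Or.inl (map_one _), Or.inr (by rw [map_neg, map_one])]

end Generators

namespace Cl

variable {p q : ℕ}

theorem val_ne_neg_val (u : (Cl p q)ˣ) : (u : Cl p q) ≠ -u := fun h => u.ne_zero <| by
  have h2 : (2 : ℝ) • (u : Cl p q) = 0 := by
    rw [two_smul]; nth_rw 2 [h]; exact add_neg_cancel _
  exact (smul_eq_zero.mp h2).resolve_left two_ne_zero

theorem ne_neg_self (u : (Cl p q)ˣ) : u ≠ -u :=
  fun h => val_ne_neg_val u (congrArg Units.val h)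

def unitGen (i : Fin (p + q)) : (Cl p q)ˣ :=
  (isUnit_of_mul_self_eqUpToSign_one (gen_mul_self i)).unit

@[simp] theorem val_unitGen (i : Fin (p + q)) : (unitGen i : Cl p q) = gen p q i := rfl

theorem unitGen_mul_self (i : Fin (p + q)) : unitGen i * unitGen i ≡± 1 :=
  Units.eqUpToSign_val_iff.mp (gen_mul_self i)

theorem unitGen_mul_unitGen_of_ne {i j : Fin (p + q)} (h : i ≠ j) :
    unitGen i * unitGen j = -(unitGen j * unitGen i) :=
  Units.ext (gen_mul_gen_of_ne h)

theorem unitGen_mul_unitGen_comm (i j : Fin (p + q)) :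
    unitGen i * unitGen j ≡± unitGen j * unitGen i := by
  rcases eq_or_ne i j with rfl | h
  exacts [EqUpToSign.refl _, Or.inr (unitGen_mul_unitGen_of_ne h)]

def monomial (s : Finset (Fin (p + q))) : (Cl p q)ˣ :=
  ((List.finRange (p + q)).map fun j => if j ∈ s then unitGen j else 1).prod

theorem unitGen_mul_ite_comm (i j : Fin (p + q)) (s : Finset (Fin (p + q))) :
    (unitGen i * if j ∈ s then unitGen j else 1) ≡±
      (if j ∈ s then unitGen j else 1) * unitGen i := by
  split_ifs
  exacts [unitGen_mul_unitGen_comm i j, by rw [mul_one, one_mul]]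

theorem unitGen_mul_prod_ite (s : Finset (Fin (p + q))) {i : Fin (p + q)}
    {L : List (Fin (p + q))} (hL : L.Nodup) (hi : i ∈ L) :
    unitGen i * (L.map fun j => if j ∈ s then unitGen j else 1).prod ≡±
      (L.map fun j => if j ∈ {i} ∆ s then unitGen j else 1).prod := by
  induction L with
  | nil => simp at hi
  | cons j L ih =>
    obtain ⟨hjL, hL⟩ := List.nodup_cons.mp hL
    simp only [List.map_cons, List.prod_cons]
    rcases eq_or_ne j i with rfl | hji
    · have hrest : (L.map fun k => if k ∈ {j} ∆ s then unitGen k else 1) =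
          L.map fun k => if k ∈ s then unitGen k else 1 := by
        refine List.map_congr_left fun k hk => ?_
        have hkj : k ≠ j := fun h => hjL (h ▸ hk)
        simp [mem_symmDiff, hkj]
      rw [hrest, ← mul_assoc]
      by_cases hj : j ∈ s
      · simpa [mem_symmDiff, hj] using (unitGen_mul_self j).mul_right _
      · simp [mem_symmDiff, hj]
    · have hi : i ∈ L := (List.mem_cons.mp hi).resolve_left hji.symm
      have hslot : j ∈ {i} ∆ s ↔ j ∈ s := by simp [mem_symmDiff, hji]
      simp only [hslot]
      calc unitGen i * ((if j ∈ s then unitGen j else 1) * _)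
          = (unitGen i * if j ∈ s then unitGen j else 1) * _ := (mul_assoc _ _ _).symm
        _ ≡± ((if j ∈ s then unitGen j else 1) * unitGen i) * _ :=
          (unitGen_mul_ite_comm i j s).mul_right _
        _ = (if j ∈ s then unitGen j else 1) * (unitGen i * _) := mul_assoc _ _ _
        _ ≡± _ := (ih hL hi).mul_left _

theorem unitGen_mul_monomial (i : Fin (p + q)) (s : Finset (Fin (p + q))) :
    unitGen i * monomial s ≡± monomial ({i} ∆ s) :=
  unitGen_mul_prod_ite s (List.nodup_finRange _) (List.mem_finRange i)

@[simp] theorem monomial_empty : monomial (∅ : Finset (Fin (p + q))) = 1 := by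
  simp [monomial]

theorem monomial_insert {i : Fin (p + q)} {s : Finset (Fin (p + q))} (h : i ∉ s) :
    monomial (insert i s) ≡± unitGen i * monomial s := by
  rw [← singleton_symmDiff_of_notMem h]
  exact (unitGen_mul_monomial i s).symm

theorem monomial_mul_monomial (s t : Finset (Fin (p + q))) :
    monomial s * monomial t ≡± monomial (s ∆ t) := by
  induction s using Finset.induction_on with
  | empty => rw [monomial_empty, one_mul, ← bot_eq_empty, bot_symmDiff]
  | insert i s hi ih =>
    calc monomial (insert i s) * monomial t
        ≡± unitGen i * monomial s * monomial t := (monomial_insert hi).mul_right _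
      _ ≡± unitGen i * monomial (s ∆ t) := by rw [mul_assoc]; exact ih.mul_left _
      _ ≡± monomial (insert i s ∆ t) := by
        rw [← singleton_symmDiff_of_notMem hi, symmDiff_assoc]
        exact unitGen_mul_monomial i _

theorem monomial_mul_self (s : Finset (Fin (p + q))) : monomial s * monomial s ≡± 1 := by
  simpa using monomial_mul_monomial s s

theorem unitGen_mul_monomial_comm (i : Fin (p + q)) (s : Finset (Fin (p + q))) :
    unitGen i * monomial s = (-1) ^ (s.erase i).card * (monomial s * unitGen i) := by
  induction s using Finset.induction_on with
  | empty => simp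
  | insert j s hj ih =>
    suffices h : unitGen i * (unitGen j * monomial s) =
        (-1) ^ ((insert j s).erase i).card * (unitGen j * monomial s * unitGen i) by
      rcases monomial_insert hj with h' | h' <;> rw [h']
      · exact h
      · rw [mul_neg, h, neg_mul, mul_neg]
    rcases eq_or_ne j i with rfl | hji
    · rw [erase_insert hj]
      rw [erase_eq_of_notMem hj] at ih
      conv_lhs => rw [ih]
      rw [((Commute.neg_one_right _).pow_right _).left_comm, mul_assoc]
    · rw [erase_insert_of_ne hji, card_insert_of_notMem (fun h => hj (mem_of_mem_erase h)),
        ← mul_assoc, unitGen_mul_unitGen_of_ne hji.symm, neg_mul, mul_assoc, ih,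
        ((Commute.neg_one_right _).pow_right _).left_comm, pow_succ, mul_neg_one, neg_mul,
        mul_assoc (unitGen j)]

theorem commute_unitGen_monomial_iff (i : Fin (p + q)) (s : Finset (Fin (p + q))) :
    Commute (unitGen i) (monomial s) ↔ Even (s.erase i).card := by
  rw [Commute, SemiconjBy, unitGen_mul_monomial_comm]
  rcases Nat.even_or_odd (s.erase i).card with h | h
  · simp [h.neg_one_pow, h]
  · rw [h.neg_one_pow, neg_one_mul]
    exact iff_of_false (ne_neg_self _).symm (Nat.not_even_iff_odd.mpr h)

theorem forall_commute_unitGen_monomial_iff (s : Finset (Fin (p + q))) :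
    (∀ i, Commute (unitGen i) (monomial s)) ↔ s = ∅ ∨ (s = univ ∧ Odd (p + q)) := by
  simp_rw [commute_unitGen_monomial_iff, forall_even_card_erase_iff, Fintype.card_fin]

theorem involute_monomial (s : Finset (Fin (p + q))) :
    CliffordAlgebra.involute (monomial s : Cl p q) = (-1) ^ s.card * monomial s := by
  induction s using Finset.induction_on with
  | empty => simp
  | insert j s hj ih =>
    have key : CliffordAlgebra.involute ((unitGen j * monomial s : (Cl p q)ˣ) : Cl p q) =
        (-1) ^ (s.card + 1) * (unitGen j * monomial s : (Cl p q)ˣ) := by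
      rw [Units.val_mul, map_mul, ih, val_unitGen, gen, CliffordAlgebra.involute_ι,
        ((Commute.neg_one_right _).pow_right _).left_comm, pow_succ]
      noncomm_ring
    rw [card_insert_of_notMem hj]
    rcases monomial_insert hj with h | h <;> rw [h]
    · exact key
    · rw [Units.val_neg, map_neg, key, mul_neg]

theorem eq_empty_of_monomial_eqUpToSign_one {s : Finset (Fin (p + q))}
    (h : monomial s ≡± 1) : s = ∅ := by
  have hcomm : ∀ i, Commute (unitGen i) (monomial s) := fun i => by
    rcases h with h | h <;> rw [h]
    exacts [Commute.one_right _, (Commute.one_right _).neg_right]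
  rcases (forall_commute_unitGen_monomial_iff s).mp hcomm with hs | ⟨rfl, hodd⟩
  · exact hs
  have hinv := involute_monomial (univ : Finset (Fin (p + q)))
  rw [card_univ, Fintype.card_fin, hodd.neg_one_pow, neg_one_mul] at hinv
  have h1 : (1 : Cl p q) ≠ -1 := val_ne_neg_val 1
  rcases h with h | h <;> rw [h] at hinv <;>
    simp only [Units.val_one, Units.val_neg, map_one, map_neg, neg_neg] at hinv
  exacts [(h1 hinv).elim, (h1 hinv.symm).elim]

theorem inv_eqUpToSign_monomial {x : (Cl p q)ˣ} {s : Finset (Fin (p + q))}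
    (h : x ≡± monomial s) : x⁻¹ ≡± monomial s :=
  (inv_eqUpToSign_self_of_mul_self ((h.mul h).trans (monomial_mul_self s))).trans h

def signedMonomials : Subgroup (Cl p q)ˣ where
  carrier := {x | ∃ s, x ≡± monomial s}
  mul_mem' := fun ⟨s, hs⟩ ⟨t, ht⟩ => ⟨s ∆ t, (hs.mul ht).trans (monomial_mul_monomial s t)⟩
  one_mem' := ⟨∅, by simp⟩
  inv_mem' := fun ⟨s, hs⟩ => ⟨s, inv_eqUpToSign_monomial hs⟩

def signedMonomial (x : Finset (Fin (p + q)) × Bool) : (Cl p q)ˣ :=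
  if x.2 then -monomial x.1 else monomial x.1

theorem range_signedMonomial :
    Set.range signedMonomial = ((signedMonomials : Subgroup (Cl p q)ˣ) : Set (Cl p q)ˣ) := by
  ext x
  constructor
  · rintro ⟨⟨s, b⟩, rfl⟩
    cases b
    exacts [⟨s, Or.inl rfl⟩, ⟨s, Or.inr rfl⟩]
  · rintro ⟨s, rfl | rfl⟩
    exacts [⟨(s, false), rfl⟩, ⟨(s, true), rfl⟩]

theorem signedMonomial_injective : Function.Injective (signedMonomial (p := p) (q := q)) := by
  rintro ⟨s, b⟩ ⟨t, c⟩ h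
  have hst : monomial s ≡± monomial t := by
    cases b <;> cases c <;> simp only [signedMonomial, Bool.false_eq_true, ↓reduceIte] at h
    exacts [Or.inl h, Or.inr h, Or.inr (neg_eq_iff_eq_neg.mp h), Or.inl (neg_inj.mp h)]
  obtain rfl : s = t := by
    refine symmDiff_eq_bot.mp (eq_empty_of_monomial_eqUpToSign_one ?_)
    calc monomial (s ∆ t) ≡± monomial s * monomial t := (monomial_mul_monomial s t).symm
      _ ≡± monomial t * monomial t := hst.mul_right _
      _ ≡± 1 := monomial_mul_self t
  cases b <;> cases c <;> simp only [signedMonomial, Bool.false_eq_true, ↓reduceIte] at h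
  exacts [rfl, (ne_neg_self _ h).elim, (ne_neg_self _ h.symm).elim, rfl]

end Cl

namespace VeeGroup

open Cl

variable {p q : ℕ}

theorem neg_one_mem : (-1 : (Cl p q)ˣ) ∈ VeeGroup p q :=
  Subgroup.subset_closure (Or.inl (by rw [Units.val_neg, Units.val_one]))

theorem unitGen_mem (i : Fin (p + q)) : unitGen i ∈ VeeGroup p q :=
  Subgroup.subset_closure (Or.inr ⟨i, rfl⟩)

theorem eq_signedMonomials : VeeGroup p q = signedMonomials := by
  refine le_antisymm ((Subgroup.closure_le _).mpr ?_) ?_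
  · rintro x (hx | ⟨i, hx⟩)
    · exact ⟨∅, Or.inr (by rw [monomial_empty]; exact Units.ext hx)⟩
    · refine ⟨{i}, ?_⟩
      rw [show x = unitGen i from Units.ext hx]
      simpa using (monomial_insert (notMem_empty i)).symm
  · rintro x ⟨s, h⟩
    have hs : monomial s ∈ VeeGroup p q :=
      Subgroup.list_prod_mem _ fun y hy => by
        obtain ⟨j, -, rfl⟩ := List.mem_map.mp hy
        split_ifs
        exacts [unitGen_mem j, one_mem _]
    rcases h with rfl | rfl
    exacts [hs, neg_one_mul (monomial s) ▸ mul_mem neg_one_mem hs]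

theorem mul_eqUpToSign_mul {x y : (Cl p q)ˣ} (hx : x ∈ VeeGroup p q)
    (hy : y ∈ VeeGroup p q) : x * y ≡± y * x := by
  rw [eq_signedMonomials] at hx hy
  obtain ⟨s, hs⟩ := hx
  obtain ⟨t, ht⟩ := hy
  calc x * y ≡± monomial s * monomial t := hs.mul ht
    _ ≡± monomial (s ∆ t) := monomial_mul_monomial s t
    _ ≡± monomial t * monomial s := by
      rw [symmDiff_comm]; exact (monomial_mul_monomial t s).symm
    _ ≡± y * x := (ht.mul hs).symm

theorem eq_or_eq_neg_one_mul_of_isConj {x y : VeeGroup p q} (h : IsConj x y) :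
    y = x ∨ y = ⟨-1, neg_one_mem⟩ * x := by
  obtain ⟨c, rfl⟩ := isConj_iff.mp h
  have hc := (mul_eqUpToSign_mul c.2 x.2).mul_right (c⁻¹ : VeeGroup p q).val
  rw [Subgroup.coe_inv, mul_inv_cancel_right] at hc
  rcases hc with hc | hc
  exacts [Or.inl (Subtype.ext hc), Or.inr (Subtype.ext (by simpa using hc))]

def signedMonomialEquiv : Finset (Fin (p + q)) × Bool ≃ VeeGroup p q :=
  (Equiv.ofInjective _ signedMonomial_injective).trans
    (Equiv.setCongr (by rw [range_signedMonomial, eq_signedMonomials]))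

@[simp] theorem coe_signedMonomialEquiv (x : Finset (Fin (p + q)) × Bool) :
    (signedMonomialEquiv x : (Cl p q)ˣ) = signedMonomial x := rfl

instance : Finite (VeeGroup p q) := Finite.of_equiv _ signedMonomialEquiv

theorem nat_card : Nat.card (VeeGroup p q) = 2 ^ (p + q) * 2 := by
  simp [← Nat.card_congr signedMonomialEquiv]

theorem mem_center_iff {x : VeeGroup p q} :
    x ∈ Subgroup.center (VeeGroup p q) ↔ ∀ i, Commute (unitGen i) (x : (Cl p q)ˣ) := by
  rw [Subgroup.mem_center_iff]
  refine ⟨fun h i => congrArg Subtype.val (h ⟨unitGen i, unitGen_mem i⟩), fun h g => ?_⟩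
  have hle : VeeGroup p q ≤ Subgroup.centralizer {(x : (Cl p q)ˣ)} := by
    refine (Subgroup.closure_le _).mpr ?_
    rintro y (hy | ⟨i, hy⟩) <;> rw [SetLike.mem_coe, Subgroup.mem_centralizer_singleton_iff]
    · rw [show y = -1 from Units.ext (by rw [hy, Units.val_neg, Units.val_one])]
      exact (Commute.neg_one_left (x : (Cl p q)ˣ)).eq
    · rw [show y = unitGen i from Units.ext hy]
      exact (h i).eq
  exact Subtype.ext (Subgroup.mem_centralizer_singleton_iff.mp (hle g.2))

theorem signedMonomialEquiv_mem_center_iff (x : Finset (Fin (p + q)) × Bool) :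
    signedMonomialEquiv x ∈ Subgroup.center (VeeGroup p q) ↔ ∀ i, Even (x.1.erase i).card := by
  rw [mem_center_iff]
  obtain ⟨s, b⟩ := x
  cases b <;> simp [signedMonomial, commute_unitGen_monomial_iff]

theorem nat_card_center : Nat.card (Subgroup.center (VeeGroup p q)) =
    Nat.card {s : Finset (Fin (p + q)) // ∀ i, Even (s.erase i).card} * 2 := by
  rw [← Fintype.card_bool, ← Nat.card_eq_fintype_card, ← Nat.card_prod,
    ← Nat.card_congr Equiv.prodSubtypeFstEquivSubtypeProd]
  exact Nat.card_congr
    (signedMonomialEquiv.subtypeEquiv fun x => (signedMonomialEquiv_mem_center_iff x).symm).symm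

end VeeGroup

/-- The number of conjugacy classes (equivalently, of inequivalent irreducible complex
representations) of the Salingaros vee group `G_{p,q}` is `1 + 2^{p+q}` if `p + q` is even
and `2 + 2^{p+q}` if `p + q` is odd. -/
theorem card_conjClasses_veeGroup (p q : ℕ) :
    (Even (p + q) → Nat.card (ConjClasses ↥(VeeGroup p q)) = 1 + 2 ^ (p + q)) ∧
    (Odd (p + q) → Nat.card (ConjClasses ↥(VeeGroup p q)) = 2 + 2 ^ (p + q)) := by
  have key := Group.two_mul_nat_card_conjClasses _
    fun _ _ => VeeGroup.eq_or_eq_neg_one_mul_of_isConj (p := p) (q := q)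
  rw [VeeGroup.nat_card, VeeGroup.nat_card_center, Finset.nat_card_forall_even_card_erase,
    Fintype.card_fin] at key
  refine ⟨fun h => ?_, fun h => ?_⟩
  · rw [if_neg (Nat.not_odd_iff_even.mpr h)] at key
    omega
  · rw [if_pos h] at key
    omega

end
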